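/- arXiv:1407.0783 — 3 statements merged into one kernel-verified Lean document; each statement's English description precedes it below -/
import Mathlib

section
/- For every τ ∈ ℝ, the lowest eigenvalue λ(τ) of the Montgomery operator P(τ) = -d²/dt² + (t²/2 + τ)² on L²(ℝ) is strictly positive. -/
open MeasureTheory

/-- The quadratic form of the Montgomery operator `P(τ) = -d²/dt² + (t²/2 + τ)²` on `L²(ℝ)`. -/
noncomputable def montgomeryForm (τ : ℝ) (f : ℝ → ℝ) : ℝ :=
  ∫ t : ℝ, ((deriv f t) ^ 2 + (t ^ 2 / 2 + τ) ^ 2 * (f t) ^ 2)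

/-- Admissible (normalized) trial functions: `f ∈ H¹(ℝ)` with `t² f ∈ L²(ℝ)` and `‖f‖₂ = 1`. -/
def montgomeryAdm (f : ℝ → ℝ) : Prop :=
  Differentiable ℝ f ∧
  Integrable (fun t : ℝ => (deriv f t) ^ 2) ∧
  Integrable (fun t : ℝ => (f t) ^ 2) ∧
  Integrable (fun t : ℝ => (t ^ 2 * f t) ^ 2) ∧
  (∫ t : ℝ, (f t) ^ 2) = 1

/-- The lowest eigenvalue `λ(τ)` of the Montgomery operator, defined variationally. -/
noncomputable def montgomeryLambda (τ : ℝ) : ℝ :=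
  sInf {E : ℝ | ∃ f : ℝ → ℝ, montgomeryAdm f ∧ montgomeryForm τ f = E}

/-!
If `g` is bounded with bounded derivative, integrating `(f' + g f)² ≥ 0` by parts gives
`∫ f'² ≥ ∫ (g' - g²) f²`, so the form is bounded below by `δ ‖f‖²` as soon as
`g' - g² + (t²/2 + τ)² ≥ δ > 0` everywhere. The potential vanishes at most at two points
`±c`, and `g = (arctan (t - c) + arctan (t + c)) / 40` has `g'` bounded below near them while
staying small, which gives `δ = 1/400` uniformly in `τ`. A normalized Gaussian shows that the
infimum is taken over a nonempty set (`sInf ∅ = 0`).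
-/

open Real

section Riccati

variable {f g g' V : ℝ → ℝ} {C C' δ : ℝ}

lemma integrable_mul_deriv_of_integrable_sq (hf : Differentiable ℝ f)
    (hf2 : Integrable fun t => f t ^ 2) (hdf2 : Integrable fun t => deriv f t ^ 2) :
    Integrable fun t => f t * deriv f t :=
  MemLp.integrable_mul (p := 2) (q := 2)
    ((memLp_two_iff_integrable_sq hf.continuous.aestronglyMeasurable).2 hf2)
    ((memLp_two_iff_integrable_sq (measurable_deriv f).aestronglyMeasurable).2 hdf2)

lemma integrable_riccati_mul_sq (hf2 : Integrable fun t => f t ^ 2)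
    (hg : ∀ t, HasDerivAt g (g' t) t) (hg' : Continuous g')
    (hgC : ∀ t, ‖g t‖ ≤ C) (hg'C : ∀ t, ‖g' t‖ ≤ C') :
    Integrable fun t => (g' t - g t ^ 2) * f t ^ 2 := by
  have hgc : Continuous g := continuous_iff_continuousAt.2 fun t => (hg t).continuousAt
  refine hf2.bdd_mul (c := C' + C ^ 2) (hg'.sub (hgc.pow 2)).aestronglyMeasurable
    (ae_of_all _ fun t => (norm_sub_le _ _).trans (add_le_add (hg'C t) ?_))
  rw [norm_pow]
  gcongr
  exact hgC t

theorem integral_riccati_mul_sq_le_integral_deriv_sq (hf : Differentiable ℝ f)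
    (hf2 : Integrable fun t => f t ^ 2) (hdf2 : Integrable fun t => deriv f t ^ 2)
    (hg : ∀ t, HasDerivAt g (g' t) t) (hg' : Continuous g')
    (hgC : ∀ t, ‖g t‖ ≤ C) (hg'C : ∀ t, ‖g' t‖ ≤ C') :
    ∫ t, (g' t - g t ^ 2) * f t ^ 2 ≤ ∫ t, deriv f t ^ 2 := by
  have hgc : Continuous g := continuous_iff_continuousAt.2 fun t => (hg t).continuousAt
  have hg_f2 : Integrable fun t => g t * f t ^ 2 :=
    hf2.bdd_mul hgc.aestronglyMeasurable (ae_of_all _ hgC)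
  have hg'_f2 : Integrable fun t => g' t * f t ^ 2 :=
    hf2.bdd_mul hg'.aestronglyMeasurable (ae_of_all _ hg'C)
  have hg2_f2 : Integrable fun t => g t ^ 2 * f t ^ 2 :=
    hf2.bdd_mul (c := C ^ 2) (hgc.pow 2).aestronglyMeasurable
      (ae_of_all _ fun t => by rw [norm_pow]; gcongr; exact hgC t)
  have hg_ff' : Integrable fun t => g t * (2 * f t * deriv f t) :=
    ((integrable_mul_deriv_of_integrable_sq hf hf2 hdf2).const_mul 2).bdd_mul
      hgc.aestronglyMeasurable (ae_of_all _ hgC) |>.congr (ae_of_all _ fun t => by ring)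
  have hsq : Integrable fun t => (deriv f t + g t * f t) ^ 2 :=
    ((hdf2.add hg_ff').add hg2_f2).congr
      (ae_of_all _ fun t => by simp only [Pi.add_apply]; ring)
  have hR := integrable_riccati_mul_sq hf2 hg hg' hgC hg'C
  have hderiv : Integrable fun t => g' t * f t ^ 2 + g t * (2 * f t * deriv f t) :=
    hg'_f2.add hg_ff'
  have hibp : ∫ t, (g' t * f t ^ 2 + g t * (2 * f t * deriv f t)) = 0 := by
    refine integral_eq_zero_of_hasDerivAt_of_integrable (fun t => ?_) hderiv hg_f2
    have hf2' : HasDerivAt (fun s => f s ^ 2) (2 * f t * deriv f t) t := by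
      simpa using (hf t).hasDerivAt.fun_pow 2
    exact (hg t).fun_mul hf2'
  have hsplit : (∫ t, deriv f t ^ 2) - ∫ t, (g' t - g t ^ 2) * f t ^ 2
      = (∫ t, (deriv f t + g t * f t) ^ 2)
        - ∫ t, (g' t * f t ^ 2 + g t * (2 * f t * deriv f t)) := by
    rw [← integral_sub hdf2 hR, ← integral_sub hsq hderiv]
    congr 1 with t
    ring
  have : 0 ≤ ∫ t, (deriv f t + g t * f t) ^ 2 := integral_nonneg fun t => sq_nonneg _
  linarith

theorem mul_integral_sq_le_integral_deriv_sq_add (hf : Differentiable ℝ f)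
    (hf2 : Integrable fun t => f t ^ 2) (hdf2 : Integrable fun t => deriv f t ^ 2)
    (hV : Integrable fun t => V t * f t ^ 2)
    (hg : ∀ t, HasDerivAt g (g' t) t) (hg' : Continuous g')
    (hgC : ∀ t, ‖g t‖ ≤ C) (hg'C : ∀ t, ‖g' t‖ ≤ C') (hδ : ∀ t, δ ≤ g' t - g t ^ 2 + V t) :
    δ * ∫ t, f t ^ 2 ≤ ∫ t, (deriv f t ^ 2 + V t * f t ^ 2) := by
  have hR := integrable_riccati_mul_sq hf2 hg hg' hgC hg'C
  calc δ * ∫ t, f t ^ 2 = ∫ t, δ * f t ^ 2 := (integral_const_mul _ _).symm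
    _ ≤ ∫ t, ((g' t - g t ^ 2) * f t ^ 2 + V t * f t ^ 2) :=
      integral_mono (hf2.const_mul δ) (hR.add hV) fun t => by
        nlinarith [hδ t, sq_nonneg (f t)]
    _ = (∫ t, (g' t - g t ^ 2) * f t ^ 2) + ∫ t, V t * f t ^ 2 := integral_add hR hV
    _ ≤ (∫ t, deriv f t ^ 2) + ∫ t, V t * f t ^ 2 :=
      add_le_add_left
        (integral_riccati_mul_sq_le_integral_deriv_sq hf hf2 hdf2 hg hg' hgC hg'C) _
    _ = ∫ t, (deriv f t ^ 2 + V t * f t ^ 2) := (integral_add hdf2 hV).symm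

end Riccati

lemma exists_sq_mul_le_sq_add (τ : ℝ) :
    ∃ c : ℝ, ∀ t : ℝ, ((t - c) * (t + c) / 2) ^ 2 ≤ (t ^ 2 / 2 + τ) ^ 2 := by
  rcases le_total τ 0 with hτ | hτ
  · refine ⟨√(-2 * τ), fun t => le_of_eq ?_⟩
    have hc := sq_sqrt (by linarith : 0 ≤ -2 * τ)
    congr 1
    linear_combination (-1 / 2 : ℝ) * hc
  · exact ⟨0, fun t => by nlinarith [sq_nonneg t]⟩

lemma integrable_montgomeryPotential_mul_sq {f : ℝ → ℝ} (τ : ℝ) (hf2 : Integrable fun t => f t ^ 2)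
    (ht2 : Integrable fun t => (t ^ 2 * f t) ^ 2) :
    Integrable fun t => (t ^ 2 / 2 + τ) ^ 2 * f t ^ 2 := by
  refine ((ht2.div_const 2).add (hf2.const_mul (2 * τ ^ 2))).mono'
    ((by fun_prop : Continuous fun t : ℝ => (t ^ 2 / 2 + τ) ^ 2).aestronglyMeasurable.mul
      hf2.aestronglyMeasurable) (ae_of_all _ fun t => ?_)
  rw [norm_of_nonneg (by positivity)]
  simp only [Pi.add_apply]
  nlinarith [mul_nonneg (sq_nonneg (t ^ 2 / 2 - τ)) (sq_nonneg (f t))]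

noncomputable def twinArctan (c t : ℝ) : ℝ := (arctan (t - c) + arctan (t + c)) / 40

noncomputable def twinArctanDeriv (c t : ℝ) : ℝ :=
  (1 / (1 + (t - c) ^ 2) + 1 / (1 + (t + c) ^ 2)) / 40

lemma hasDerivAt_twinArctan (c t : ℝ) : HasDerivAt (twinArctan c) (twinArctanDeriv c t) t := by
  have h₁ : HasDerivAt (fun x => arctan (x - c)) (1 / (1 + (t - c) ^ 2)) t := by
    simpa using ((hasDerivAt_id t).sub_const c).arctan
  have h₂ : HasDerivAt (fun x => arctan (x + c)) (1 / (1 + (t + c) ^ 2)) t := by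
    simpa using ((hasDerivAt_id t).add_const c).arctan
  exact (h₁.fun_add h₂).div_const 40

lemma continuous_twinArctanDeriv (c : ℝ) : Continuous (twinArctanDeriv c) := by
  unfold twinArctanDeriv
  fun_prop (disch := intros; positivity)

lemma norm_twinArctan_le (c t : ℝ) : ‖twinArctan c t‖ ≤ 1 / 10 := by
  have h₁ := arctan_lt_pi_div_two (t - c)
  have h₁' := neg_pi_div_two_lt_arctan (t - c)
  have h₂ := arctan_lt_pi_div_two (t + c)
  have h₂' := neg_pi_div_two_lt_arctan (t + c)
  rw [Real.norm_eq_abs, twinArctan, abs_le]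
  constructor <;> linarith [pi_le_four]

lemma twinArctanDeriv_nonneg (c t : ℝ) : 0 ≤ twinArctanDeriv c t := by
  unfold twinArctanDeriv; positivity

lemma norm_twinArctanDeriv_le (c t : ℝ) : ‖twinArctanDeriv c t‖ ≤ 1 / 20 := by
  have h₁ : 1 / (1 + (t - c) ^ 2) ≤ 1 := by
    rw [div_le_one (by positivity)]; nlinarith [sq_nonneg (t - c)]
  have h₂ : 1 / (1 + (t + c) ^ 2) ≤ 1 := by
    rw [div_le_one (by positivity)]; nlinarith [sq_nonneg (t + c)]
  rw [Real.norm_eq_abs, abs_of_nonneg (twinArctanDeriv_nonneg c t), twinArctanDeriv]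
  linarith

lemma one_div_four_hundred_le_riccati_twinArctan (c t : ℝ) :
    1 / 400 ≤ twinArctanDeriv c t - twinArctan c t ^ 2 + ((t - c) * (t + c) / 2) ^ 2 := by
  have hg : twinArctan c t ^ 2 ≤ 1 / 100 := by
    have := norm_twinArctan_le c t
    rw [Real.norm_eq_abs] at this
    nlinarith [sq_abs (twinArctan c t), abs_nonneg (twinArctan c t)]
  have hW := sq_nonneg ((t - c) * (t + c) / 2)
  have hbig : ∀ s : ℝ, s ^ 2 ≤ 1 → 1 / 2 ≤ 1 / (1 + s ^ 2) := fun s hs => by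
    rw [div_le_div_iff₀ (by norm_num) (by positivity)]; linarith
  have h₁ : 0 ≤ 1 / (1 + (t - c) ^ 2) := by positivity
  have h₂ : 0 ≤ 1 / (1 + (t + c) ^ 2) := by positivity
  rcases le_total ((t - c) ^ 2) 1 with hc₁ | hc₁
  · have := hbig _ hc₁; unfold twinArctanDeriv; linarith
  rcases le_total ((t + c) ^ 2) 1 with hc₂ | hc₂
  · have := hbig _ hc₂; unfold twinArctanDeriv; linarith
  have : 1 / 4 ≤ ((t - c) * (t + c) / 2) ^ 2 := by
    rw [div_pow, mul_pow]; nlinarith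
  linarith [twinArctanDeriv_nonneg c t]

theorem one_div_four_hundred_le_montgomeryForm (τ : ℝ) {f : ℝ → ℝ} (hf : montgomeryAdm f) :
    1 / 400 ≤ montgomeryForm τ f := by
  obtain ⟨hdiff, hdf2, hf2, ht2, hnorm⟩ := hf
  obtain ⟨c, hc⟩ := exists_sq_mul_le_sq_add τ
  have := mul_integral_sq_le_integral_deriv_sq_add (δ := 1 / 400) hdiff hf2 hdf2
    (integrable_montgomeryPotential_mul_sq τ hf2 ht2) (hasDerivAt_twinArctan c)
    (continuous_twinArctanDeriv c) (norm_twinArctan_le c) (norm_twinArctanDeriv_le c)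
    fun t => by linarith [one_div_four_hundred_le_riccati_twinArctan c t, hc t]
  rwa [hnorm, mul_one] at this

noncomputable def normalizedGaussian (t : ℝ) : ℝ := (√√π)⁻¹ * exp (-t ^ 2 / 2)

lemma normalizedGaussian_sq (t : ℝ) :
    normalizedGaussian t ^ 2 = (√π)⁻¹ * exp (-1 * t ^ 2) := by
  rw [normalizedGaussian, mul_pow, inv_pow, sq_sqrt (sqrt_nonneg π), ← exp_nat_mul]
  ring_nf

lemma hasDerivAt_normalizedGaussian (t : ℝ) :
    HasDerivAt normalizedGaussian (-t * normalizedGaussian t) t := by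
  have h : HasDerivAt (fun s : ℝ => -s ^ 2 / 2) (-t) t :=
    ((hasDerivAt_pow 2 t).fun_neg.div_const 2).congr_deriv (by ring)
  exact (h.exp.const_mul (√√π)⁻¹).congr_deriv (by rw [normalizedGaussian]; ring)

lemma integrable_pow_mul_exp_neg_sq (n : ℕ) :
    Integrable fun t : ℝ => t ^ n * exp (-1 * t ^ 2) := by
  simpa using integrable_rpow_mul_exp_neg_mul_sq one_pos (s := n)
    (by linarith [n.cast_nonneg (α := ℝ)])

lemma montgomeryAdm_normalizedGaussian : montgomeryAdm normalizedGaussian := by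
  have hderiv t :
      deriv normalizedGaussian t ^ 2 = (√π)⁻¹ * (t ^ 2 * exp (-1 * t ^ 2)) := by
    rw [(hasDerivAt_normalizedGaussian t).deriv, mul_pow, normalizedGaussian_sq]
    ring
  refine ⟨fun t => (hasDerivAt_normalizedGaussian t).differentiableAt, ?_, ?_, ?_, ?_⟩
  · simpa only [hderiv] using (integrable_pow_mul_exp_neg_sq 2).const_mul (√π)⁻¹
  · simpa only [normalizedGaussian_sq] using
      (integrable_exp_neg_mul_sq one_pos).const_mul (√π)⁻¹
  · refine ((integrable_pow_mul_exp_neg_sq 4).const_mul (√π)⁻¹).congr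
      (ae_of_all _ fun t => ?_)
    simp only [mul_pow, normalizedGaussian_sq]
    ring
  · simp only [normalizedGaussian_sq, integral_const_mul, integral_gaussian, div_one]
    exact inv_mul_cancel₀ (sqrt_pos.2 pi_pos).ne'

/-- For every `τ ∈ ℝ`, the lowest eigenvalue `λ(τ)` of the Montgomery operator is positive. -/
theorem montgomeryLambda_pos (τ : ℝ) : 0 < montgomeryLambda τ := by
  have hne : {E : ℝ | ∃ f : ℝ → ℝ, montgomeryAdm f ∧ montgomeryForm τ f = E}.Nonempty :=
    ⟨_, normalizedGaussian, montgomeryAdm_normalizedGaussian, rfl⟩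
  calc (0 : ℝ) < 1 / 400 := by norm_num
    _ ≤ montgomeryLambda τ := le_csInf hne fun _ ⟨_, hf, hE⟩ =>
      hE ▸ one_div_four_hundred_le_montgomeryForm τ hf
end

section
/- The lowest eigenvalue of the Montgomery operator at τ = 0 satisfies λ(0) ≤ (3/4)^{4/3}. -/
/-!
Testing the quadratic form on the normalized Gaussian `(a/π)^(1/4) e^(-a t²/2)` gives, through the
Gaussian moments `∫ t² e^(-a t²) = √(π/a)/(2a)` and `∫ t⁴ e^(-a t²) = 3√(π/a)/(4a²)`, the value
`a/2 + 3/(16a²)` at `τ = 0`. This is minimal at `a³ = 3/4`, where it equals `a⁴ = (3/4)^(4/3)`.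
-/

open MeasureTheory

open Real

lemma integrable_pow_mul_exp_neg_mul_sq {b : ℝ} (hb : 0 < b) (n : ℕ) :
    Integrable fun x : ℝ => x ^ n * exp (-b * x ^ 2) := by
  simpa [Real.rpow_natCast] using
    integrable_rpow_mul_exp_neg_mul_sq hb (s := n) (by linarith [n.cast_nonneg (α := ℝ)])

lemma integral_pow_add_two_mul_exp_neg_mul_sq {b : ℝ} (hb : 0 < b) (n : ℕ) :
    ∫ x : ℝ, x ^ (n + 2) * exp (-b * x ^ 2)
      = (n + 1) / (2 * b) * ∫ x : ℝ, x ^ n * exp (-b * x ^ 2) := by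
  have hu (x : ℝ) : HasDerivAt (fun x : ℝ => x ^ (n + 1)) ((n + 1) * x ^ n) x := by
    simpa using hasDerivAt_pow (n + 1) x
  have hv (x : ℝ) : HasDerivAt (fun x : ℝ => exp (-b * x ^ 2)) (-2 * b * x * exp (-b * x ^ 2)) x := by
    convert ((hasDerivAt_pow 2 x).const_mul (-b)).exp using 1
    ring
  have huv' : (fun x : ℝ => x ^ (n + 1) * (-2 * b * x * exp (-b * x ^ 2)))
      = fun x => -(2 * b) * (x ^ (n + 2) * exp (-b * x ^ 2)) := by
    funext x; ring
  have hu'v : (fun x : ℝ => (n + 1) * x ^ n * exp (-b * x ^ 2))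
      = fun x => (n + 1) * (x ^ n * exp (-b * x ^ 2)) := by
    funext x; ring
  have parts := integral_mul_deriv_eq_deriv_mul_of_integrable (fun x _ => hu x) (fun x _ => hv x)
    (by simpa only [Pi.mul_def, huv'] using (integrable_pow_mul_exp_neg_mul_sq hb (n + 2)).const_mul _)
    (by simpa only [Pi.mul_def, hu'v] using (integrable_pow_mul_exp_neg_mul_sq hb n).const_mul _)
    (integrable_pow_mul_exp_neg_mul_sq hb (n + 1))
  simp only [huv', hu'v, integral_const_mul] at parts
  rw [div_mul_eq_mul_div, eq_div_iff (by positivity)]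
  linarith

lemma integral_sq_mul_exp_neg_mul_sq {b : ℝ} (hb : 0 < b) :
    ∫ x : ℝ, x ^ 2 * exp (-b * x ^ 2) = √(π / b) / (2 * b) := by
  rw [integral_pow_add_two_mul_exp_neg_mul_sq hb 0]
  simp only [pow_zero, one_mul, integral_gaussian]
  ring

lemma integral_pow_four_mul_exp_neg_mul_sq {b : ℝ} (hb : 0 < b) :
    ∫ x : ℝ, x ^ 4 * exp (-b * x ^ 2) = 3 * √(π / b) / (4 * b ^ 2) := by
  rw [integral_pow_add_two_mul_exp_neg_mul_sq hb 2, integral_sq_mul_exp_neg_mul_sq hb]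
  field_simp
  norm_num

noncomputable def gaussianTrial (a t : ℝ) : ℝ :=
  (a / π) ^ (1 / 4 : ℝ) * exp (-(a / 2) * t ^ 2)

lemma hasDerivAt_gaussianTrial (a t : ℝ) :
    HasDerivAt (gaussianTrial a) (-a * t * gaussianTrial a t) t := by
  refine ((((hasDerivAt_pow 2 t).const_mul (-(a / 2))).exp).const_mul _).congr_deriv ?_
  simp only [gaussianTrial]
  norm_num
  ring

lemma gaussianTrial_sq {a : ℝ} (ha : 0 ≤ a) (t : ℝ) :
    gaussianTrial a t ^ 2 = (√(π / a))⁻¹ * exp (-a * t ^ 2) := by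
  have hc : ((a / π) ^ (1 / 4 : ℝ)) ^ 2 = √(a / π) := by
    rw [← Real.rpow_natCast, ← Real.rpow_mul (by positivity), Real.sqrt_eq_rpow]
    norm_num
  rw [gaussianTrial, mul_pow, hc, ← Real.sqrt_inv, inv_div, sq, ← Real.exp_add]
  ring_nf

lemma integral_gaussianTrial_sq {a : ℝ} (ha : 0 < a) : ∫ t, gaussianTrial a t ^ 2 = 1 := by
  simp only [gaussianTrial_sq ha.le, integral_const_mul, integral_gaussian]
  exact inv_mul_cancel₀ (by positivity)

lemma montgomeryAdm_gaussianTrial {a : ℝ} (ha : 0 < a) : montgomeryAdm (gaussianTrial a) := by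
  have hderiv (t : ℝ) : deriv (gaussianTrial a) t ^ 2 = a ^ 2 * (t ^ 2 * gaussianTrial a t ^ 2) := by
    rw [(hasDerivAt_gaussianTrial a t).deriv]; ring
  have hint (n : ℕ) : Integrable fun t => t ^ n * gaussianTrial a t ^ 2 := by
    simpa only [gaussianTrial_sq ha.le, mul_left_comm] using
      (integrable_pow_mul_exp_neg_mul_sq ha n).const_mul (√(π / a))⁻¹
  refine ⟨fun t => (hasDerivAt_gaussianTrial a t).differentiableAt, ?_, ?_, ?_,
    integral_gaussianTrial_sq ha⟩
  · simpa only [hderiv] using (hint 2).const_mul (a ^ 2)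
  · simpa using hint 0
  · simpa only [mul_pow, ← pow_mul] using hint 4

lemma montgomeryForm_gaussianTrial {a : ℝ} (ha : 0 < a) (τ : ℝ) :
    montgomeryForm τ (gaussianTrial a) = a / 2 + 3 / (16 * a ^ 2) + τ / (2 * a) + τ ^ 2 := by
  have hE (n : ℕ) (c : ℝ) : Integrable fun t : ℝ => c * (t ^ n * exp (-a * t ^ 2)) :=
    (integrable_pow_mul_exp_neg_mul_sq ha n).const_mul c
  have hE0 : Integrable fun t : ℝ => τ ^ 2 * exp (-a * t ^ 2) := by simpa using hE 0 (τ ^ 2)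
  have hintegrand : (fun t => deriv (gaussianTrial a) t ^ 2
        + (t ^ 2 / 2 + τ) ^ 2 * gaussianTrial a t ^ 2)
      = fun t => (√(π / a))⁻¹ * (1 / 4 * (t ^ 4 * exp (-a * t ^ 2))
          + (a ^ 2 + τ) * (t ^ 2 * exp (-a * t ^ 2)) + τ ^ 2 * exp (-a * t ^ 2)) := by
    funext t
    rw [(hasDerivAt_gaussianTrial a t).deriv, mul_pow, gaussianTrial_sq ha.le]
    ring
  rw [montgomeryForm, hintegrand, integral_const_mul,
    integral_add (f := fun t => 1 / 4 * (t ^ 4 * exp (-a * t ^ 2))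
      + (a ^ 2 + τ) * (t ^ 2 * exp (-a * t ^ 2))) ((hE 4 _).add (hE 2 _)) hE0,
    integral_add (hE 4 _) (hE 2 _)]
  simp only [integral_const_mul, integral_pow_four_mul_exp_neg_mul_sq ha,
    integral_sq_mul_exp_neg_mul_sq ha, integral_gaussian]
  have hs : √(π / a) ≠ 0 := by positivity
  field_simp
  ring

lemma montgomeryLambda_le_montgomeryForm (τ : ℝ) {f : ℝ → ℝ} (hf : montgomeryAdm f) :
    montgomeryLambda τ ≤ montgomeryForm τ f := by
  refine csInf_le ⟨0, ?_⟩ ⟨f, hf, rfl⟩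
  rintro _ ⟨g, -, rfl⟩
  exact integral_nonneg fun t => by positivity

/-- The lowest eigenvalue of the Montgomery operator at `τ = 0` satisfies
`λ(0) ≤ (3/4)^(4/3)`. -/
theorem montgomeryLambda_zero_le :
    montgomeryLambda 0 ≤ (3 / 4 : ℝ) ^ ((4 : ℝ) / 3) := by
  set a : ℝ := (3 / 4 : ℝ) ^ (1 / 3 : ℝ)
  have ha : 0 < a := by positivity
  have ha_pow (n : ℕ) : a ^ n = (3 / 4 : ℝ) ^ ((n : ℝ) / 3) := by
    rw [← Real.rpow_natCast, ← Real.rpow_mul (by norm_num), one_div_mul_eq_div]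
  have ha3 : a ^ 3 = 3 / 4 := by rw [ha_pow]; norm_num
  calc montgomeryLambda 0
      ≤ montgomeryForm 0 (gaussianTrial a) :=
        montgomeryLambda_le_montgomeryForm 0 (montgomeryAdm_gaussianTrial ha)
    _ = a / 2 + 3 / (16 * a ^ 2) := by rw [montgomeryForm_gaussianTrial ha]; ring
    _ = a ^ 4 := by field_simp; linear_combination -(32 * a ^ 3 + 8) * ha3
    _ = (3 / 4 : ℝ) ^ ((4 : ℝ) / 3) := by rw [ha_pow]; norm_num
end

section
/- (Abstract subadditivity limit) Let f : (0,∞) → ℝ be bounded, and suppose there exist constants C > 0 and a function so that for all a ∈ (0,1), all ℓ ≥ 1 and all integers n ≥ 2, f(nℓ) ≥ f((1+a)ℓ) − C(a + 1/(a²ℓ²)). Then f(ℓ) converges to a finite limit as ℓ → ∞. -/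
open Filter Topology

/-!
Let `S` and `I` be the `limsup` and `liminf` of `f` at infinity. Fix a small `ε` and pick `t`
large with `f t` close to `S`. Every `L ≥ t / ε` factors as `L = n ℓ` with `(1 + a) ℓ = t`,
`n ≥ 2` and `a ∈ [ε, 2ε]` (take `n = ⌈L (1 + ε) / t⌉`), so the hypothesis gives
`f L ≥ f t - O(ε)` for all large `L`, i.e. `I ≥ S - O(ε)`.
-/

theorem exists_nat_mul_eq_and_one_add_mul_eq {ε t L : ℝ} (hε : 0 < ε) (hε' : ε < 1 / 2)
    (ht : 0 < t) (htL : t ≤ ε * L) :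
    ∃ n : ℕ, 2 ≤ n ∧ ∃ a ℓ : ℝ, ε ≤ a ∧ a ≤ 2 * ε ∧ (n : ℝ) * ℓ = L ∧ (1 + a) * ℓ = t := by
  have hL : 2 * t < L := by nlinarith
  have hLpos : 0 < L := by linarith
  set n := ⌈L * (1 + ε) / t⌉₊
  have hn_ge : L * (1 + ε) ≤ n * t := (div_le_iff₀ ht).1 (Nat.le_ceil _)
  have hn_lt : n * t < L * (1 + ε) + t := by
    have := mul_lt_mul_of_pos_right (Nat.ceil_lt_add_one (by positivity : 0 ≤ L * (1 + ε) / t)) ht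
    rwa [add_mul, div_mul_cancel₀ _ ht.ne', one_mul] at this
  have hn_pos : (0 : ℝ) < n := by nlinarith
  refine ⟨n, ?_, n * t / L - 1, L / n, ?_, ?_, mul_div_cancel₀ L hn_pos.ne', ?_⟩
  · have : (2 : ℝ) < n := by nlinarith
    exact_mod_cast this.le
  · rw [le_sub_iff_add_le, le_div_iff₀ hLpos]
    linarith
  · rw [sub_le_iff_le_add, div_le_iff₀ hLpos]
    linarith
  · field_simp
    ring

theorem one_div_sq_mul_sq_le {ε a ℓ : ℝ} (hε : 0 < ε) (hε' : ε ≤ 1) (hεa : ε ≤ a) (hℓ : 0 < ℓ) :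
    1 / (a ^ 2 * ℓ ^ 2) ≤ 4 / (ε * ((1 + a) * ℓ)) ^ 2 := by
  have ha : 0 < a := hε.trans_le hεa
  have hεa' : ε * (1 + a) ≤ 2 * a := by nlinarith
  rw [div_le_div_iff₀ (by positivity) (by positivity)]
  have := pow_le_pow_left₀ (by positivity) (mul_le_mul_of_nonneg_right hεa' hℓ.le) 2
  nlinarith

def AlmostSuperadditive (f : ℝ → ℝ) (C : ℝ) : Prop :=
  ∀ a : ℝ, 0 < a → a < 1 → ∀ ℓ : ℝ, 1 ≤ ℓ → ∀ n : ℕ, 2 ≤ n →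
    f ((1 + a) * ℓ) - C * (a + 1 / (a ^ 2 * ℓ ^ 2)) ≤ f ((n : ℝ) * ℓ)

namespace AlmostSuperadditive

variable {f : ℝ → ℝ} {C : ℝ}

theorem sub_le (hf : AlmostSuperadditive f C) {ε t L : ℝ} (hε : 0 < ε) (hε' : ε < 1 / 2)
    (ht : 2 ≤ t) (htL : t ≤ ε * L) :
    f t - |C| * (2 * ε + 4 / (ε * t) ^ 2) ≤ f L := by
  obtain ⟨n, hn, a, ℓ, hεa, ha, rfl, rfl⟩ :=
    exists_nat_mul_eq_and_one_add_mul_eq hε hε' (by linarith) htL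
  have ha_pos : 0 < a := hε.trans_le hεa
  have hℓ : 1 ≤ ℓ := by nlinarith
  have herr : a + 1 / (a ^ 2 * ℓ ^ 2) ≤ 2 * ε + 4 / (ε * ((1 + a) * ℓ)) ^ 2 :=
    add_le_add ha (one_div_sq_mul_sq_le hε (by linarith) hεa (by linarith))
  calc f ((1 + a) * ℓ) - |C| * (2 * ε + 4 / (ε * ((1 + a) * ℓ)) ^ 2)
      ≤ f ((1 + a) * ℓ) - C * (a + 1 / (a ^ 2 * ℓ ^ 2)) :=
        sub_le_sub_left ((mul_le_mul_of_nonneg_right (le_abs_self C) (by positivity)).trans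
          (mul_le_mul_of_nonneg_left herr (abs_nonneg C))) _
    _ ≤ f (n * ℓ) := hf a (by linarith) (by linarith) ℓ hℓ n hn

theorem limsup_le_liminf (hf : AlmostSuperadditive f C) (hle : IsBoundedUnder (· ≤ ·) atTop f)
    (hge : IsBoundedUnder (· ≥ ·) atTop f) : limsup f atTop ≤ liminf f atTop := by
  set K := 1 + 3 * |C|
  have hK : ∀ ε, 0 < ε → ε < 1 / 2 → limsup f atTop ≤ liminf f atTop + K * ε := by
    intro ε hε hε'
    have hsmall : ∀ᶠ t in atTop, 4 / (ε * t) ^ 2 ≤ ε :=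
      (tendsto_const_nhds.div_atTop
        ((tendsto_pow_atTop two_ne_zero).comp (tendsto_id.const_mul_atTop hε))).eventually
        (ge_mem_nhds hε)
    obtain ⟨t, hft, ht, hts⟩ :=
      ((frequently_lt_of_lt_limsup hge.isCoboundedUnder_le (sub_lt_self _ hε)).and_eventually
        ((eventually_ge_atTop 2).and hsmall)).exists
    have : limsup f atTop - K * ε ≤ liminf f atTop := by
      refine le_liminf_of_le hle.isCoboundedUnder_ge ?_
      filter_upwards [eventually_ge_atTop (t / ε)] with L hL
      have := hf.sub_le hε hε' ht ((div_le_iff₀' hε).1 hL)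
      nlinarith [abs_nonneg C]
    linarith
  have hlim : Tendsto (fun ε => liminf f atTop + K * ε) (𝓝[>] 0) (𝓝 (liminf f atTop)) := by
    refine (Continuous.tendsto' (by fun_prop) 0 _ ?_).mono_left nhdsWithin_le_nhds
    simp
  exact ge_of_tendsto hlim <| eventually_of_mem (Ioo_mem_nhdsGT (by norm_num : (0 : ℝ) < 1 / 2))
    fun ε hε => hK ε hε.1 hε.2

end AlmostSuperadditive

theorem almost_superadditive_limit_general (f : ℝ → ℝ) (C M : ℝ)
    (hbdd : ∀ ℓ : ℝ, 0 < ℓ → |f ℓ| ≤ M)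
    (hsub : ∀ a : ℝ, 0 < a → a < 1 → ∀ ℓ : ℝ, 1 ≤ ℓ → ∀ n : ℕ, 2 ≤ n →
      f ((1 + a) * ℓ) - C * (a + 1 / (a ^ 2 * ℓ ^ 2)) ≤ f ((n : ℝ) * ℓ)) :
    ∃ E : ℝ, Filter.Tendsto f Filter.atTop (nhds E) := by
  have hM : ∀ᶠ ℓ in atTop, |f ℓ| ≤ M := eventually_gt_atTop 0 |>.mono hbdd
  obtain ⟨hle, hge⟩ := isBoundedUnder_le_abs.1 (isBoundedUnder_of_eventually_le hM)
  exact ⟨_, tendsto_of_le_liminf_of_limsup_le le_rfl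
    ((show AlmostSuperadditive f C from hsub).limsup_le_liminf hle hge) hle hge⟩

/-- Abstract almost-superadditivity lemma: if `f : (0,∞) → ℝ` is bounded and
`f(nℓ) ≥ f((1+a)ℓ) − C(a + 1/(a²ℓ²))` for all `a ∈ (0,1)`, `ℓ ≥ 1` and integers `n ≥ 2`,
then `f(ℓ)` converges to a finite limit as `ℓ → ∞`. -/
theorem almost_superadditive_limit (f : ℝ → ℝ) (C M : ℝ) (hC : 0 < C)
    (hbdd : ∀ ℓ : ℝ, 0 < ℓ → |f ℓ| ≤ M)
    (hsub : ∀ a : ℝ, 0 < a → a < 1 → ∀ ℓ : ℝ, 1 ≤ ℓ → ∀ n : ℕ, 2 ≤ n →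
      f ((1 + a) * ℓ) - C * (a + 1 / (a ^ 2 * ℓ ^ 2)) ≤ f ((n : ℝ) * ℓ)) :
    ∃ E : ℝ, Filter.Tendsto f Filter.atTop (nhds E) :=
  almost_superadditive_limit_general f C M hbdd hsub
end
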